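/- arXiv:2510.10608 — 3 statements merged into one kernel-verified Lean document; each statement's English description precedes it below -/
import Mathlib

section
/- Let $a, b_1, b_2, b_3, b_4$ be integers with $3a + b_1 + b_2 + b_3 + b_4 = 5k-1$ for some integer $k$. Then $a^2 - b_1^2 - b_2^2 - b_3^2 - b_4^2 \le 5k^2 - 2k - 1$. Equality holds if and only if either ($a = 3k$ and exactly one $b_i$ equals $-1-k$ while the other three equal $-k$), or ($a = 3k-1$ and exactly two of the $b_i$ equal $-k$ while the other two equal $1-k$). -/
lemma aux1 (c : ℤ) : 0 ≤ c * (c + 1) := by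
  rcases le_or_gt 0 c with h | h
  · exact mul_nonneg h (by linarith)
  · have : 0 ≤ (-c) * (-(c + 1)) := mul_nonneg (by linarith) (by linarith)
    nlinarith [this]

lemma aux2 (c : ℤ) : 0 ≤ c * (c - 1) := by
  have := aux1 (-c); nlinarith [this]

lemma sqbound (c : ℤ) (h : c ^ 2 ≤ 2) : -1 ≤ c ∧ c ≤ 1 := by
  constructor
  · by_contra hc
    push_neg at hc
    have h2 : c ≤ -2 := by omega
    nlinarith [mul_nonneg (by linarith : (0:ℤ) ≤ -c - 2) (by linarith : (0:ℤ) ≤ -c)]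
  · by_contra hc
    push_neg at hc
    have h2 : 2 ≤ c := by omega
    nlinarith [mul_nonneg (by linarith : (0:ℤ) ≤ c - 2) (by linarith : (0:ℤ) ≤ c)]

lemma keyineq (t c1 c2 c3 c4 : ℤ) (h1 : 3 * t + (c1 + c2 + c3 + c4) = -1) :
    t ^ 2 + 1 ≤ c1 ^ 2 + c2 ^ 2 + c3 ^ 2 + c4 ^ 2 := by
  have ht : t = 0 ∨ t = -1 ∨ 1 ≤ t ∨ t ≤ -2 := by omega
  rcases ht with rfl | rfl | ht | ht
  · nlinarith [aux1 c1, aux1 c2, aux1 c3, aux1 c4]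
  · nlinarith [aux2 c1, aux2 c2, aux2 c3, aux2 c4]
  · nlinarith [sq_nonneg (c1-c2), sq_nonneg (c1-c3), sq_nonneg (c1-c4),
      sq_nonneg (c2-c3), sq_nonneg (c2-c4), sq_nonneg (c3-c4),
      mul_nonneg (by linarith : (0:ℤ) ≤ t - 1) (by linarith : (0:ℤ) ≤ t)]
  · nlinarith [sq_nonneg (c1-c2), sq_nonneg (c1-c3), sq_nonneg (c1-c4),
      sq_nonneg (c2-c3), sq_nonneg (c2-c4), sq_nonneg (c3-c4),
      mul_nonneg (by linarith : (0:ℤ) ≤ -t - 2) (by linarith : (0:ℤ) ≤ -t)]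

lemma keyeq (t c1 c2 c3 c4 : ℤ) (h1 : 3 * t + (c1 + c2 + c3 + c4) = -1)
    (h2 : c1 ^ 2 + c2 ^ 2 + c3 ^ 2 + c4 ^ 2 = t ^ 2 + 1) :
    (t = 0 ∧ ({c1, c2, c3, c4} : Multiset ℤ) = {-1, 0, 0, 0}) ∨
    (t = -1 ∧ ({c1, c2, c3, c4} : Multiset ℤ) = {0, 0, 1, 1}) := by
  have hs : c1 + c2 + c3 + c4 = -1 - 3 * t := by linarith
  have h3 : 5 * t ^ 2 + 6 * t - 3 ≤ 0 := by
    nlinarith [sq_nonneg (c1-c2), sq_nonneg (c1-c3), sq_nonneg (c1-c4),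
      sq_nonneg (c2-c3), sq_nonneg (c2-c4), sq_nonneg (c3-c4), hs, sq_nonneg (c1+c2+c3+c4+1+3*t)]
  have ht : t = 0 ∨ t = -1 := by
    by_contra hc
    push_neg at hc
    have : 1 ≤ t ∨ t ≤ -2 := by omega
    rcases this with h | h <;> nlinarith
  have ht2 : t ^ 2 ≤ 1 := by rcases ht with rfl | rfl <;> norm_num
  obtain ⟨hb1l, hb1r⟩ := sqbound c1 (by nlinarith [sq_nonneg c2, sq_nonneg c3, sq_nonneg c4])
  obtain ⟨hb2l, hb2r⟩ := sqbound c2 (by nlinarith [sq_nonneg c1, sq_nonneg c3, sq_nonneg c4])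
  obtain ⟨hb3l, hb3r⟩ := sqbound c3 (by nlinarith [sq_nonneg c1, sq_nonneg c2, sq_nonneg c4])
  obtain ⟨hb4l, hb4r⟩ := sqbound c4 (by nlinarith [sq_nonneg c1, sq_nonneg c2, sq_nonneg c3])
  rcases ht with rfl | rfl <;>
    interval_cases c1 <;> interval_cases c2 <;> interval_cases c3 <;> interval_cases c4 <;>
      first | decide | (norm_num at h1 h2) | (norm_num at h1; done) | (norm_num at h2; done)

theorem stmt_2 (a b1 b2 b3 b4 k : ℤ)
    (h : 3 * a + b1 + b2 + b3 + b4 = 5 * k - 1) :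
    a ^ 2 - b1 ^ 2 - b2 ^ 2 - b3 ^ 2 - b4 ^ 2 ≤ 5 * k ^ 2 - 2 * k - 1 ∧
    (a ^ 2 - b1 ^ 2 - b2 ^ 2 - b3 ^ 2 - b4 ^ 2 = 5 * k ^ 2 - 2 * k - 1 ↔
      (a = 3 * k ∧ ({b1, b2, b3, b4} : Multiset ℤ) = {-1 - k, -k, -k, -k}) ∨
      (a = 3 * k - 1 ∧ ({b1, b2, b3, b4} : Multiset ℤ) = {-k, -k, 1 - k, 1 - k})) := by
  have h1 : 3 * (a - 3 * k) + ((b1 + k) + (b2 + k) + (b3 + k) + (b4 + k)) = -1 := by linarith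
  have e : a ^ 2 - b1 ^ 2 - b2 ^ 2 - b3 ^ 2 - b4 ^ 2 =
      5 * k ^ 2 - 2 * k + (a - 3 * k) ^ 2 -
        ((b1 + k) ^ 2 + (b2 + k) ^ 2 + (b3 + k) ^ 2 + (b4 + k) ^ 2) := by
    linear_combination 2 * k * h
  have hin := keyineq (a - 3 * k) (b1 + k) (b2 + k) (b3 + k) (b4 + k) h1
  constructor
  · linarith
  constructor
  · intro heq
    have h2 : (b1 + k) ^ 2 + (b2 + k) ^ 2 + (b3 + k) ^ 2 + (b4 + k) ^ 2 =
        (a - 3 * k) ^ 2 + 1 := by linarith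
    rcases keyeq (a - 3 * k) (b1 + k) (b2 + k) (b3 + k) (b4 + k) h1 h2 with ⟨ht, hm⟩ | ⟨ht, hm⟩
    · left
      refine ⟨by linarith, ?_⟩
      have := congrArg (Multiset.map (fun x => x - k)) hm
      simpa using this
    · right
      refine ⟨by linarith, ?_⟩
      have := congrArg (Multiset.map (fun x => x - k)) hm
      simpa using this
  · rintro (⟨ha, hm⟩ | ⟨ha, hm⟩) <;>
    · have := congrArg (fun s : Multiset ℤ => (s.map (fun x => x ^ 2)).sum) hm
      simp at this
      subst ha
      linarith [this]
end

section
/- Let $a, b_1, b_2, b_3, b_4$ be integers with $3a + b_1 + b_2 + b_3 + b_4 = 5k+2$ for some integer $k$. Then $a^2 - b_1^2 - b_2^2 - b_3^2 - b_4^2 \le 5k^2 + 4k$. Equality holds if and only if either ($a = 3k+1$ and exactly one $b_i$ equals $-1-k$ while the other three equal $-k$), or ($a = 3k+2$ and all $b_i$ equal $-1-k$). -/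
set_option maxHeartbeats 1000000

private lemma consec (n : ℤ) : 0 ≤ n * (n + 1) := by
  rcases le_or_gt 0 n with h | h
  · nlinarith
  · nlinarith

private lemma perm2 (u v : ℤ) : ({u, v, u, u} : Multiset ℤ) = {v, u, u, u} := by
  simp only [Multiset.insert_eq_cons]
  rw [Multiset.cons_swap]

private lemma perm3 (u v : ℤ) : ({u, u, v, u} : Multiset ℤ) = {v, u, u, u} := by
  simp only [Multiset.insert_eq_cons]
  rw [Multiset.cons_swap u v, Multiset.cons_swap u v]

private lemma perm4 (u v : ℤ) : ({u, u, u, v} : Multiset ℤ) = {v, u, u, u} := by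
  simp only [Multiset.insert_eq_cons, ← Multiset.cons_zero]
  rw [Multiset.cons_swap u v, Multiset.cons_swap u v, Multiset.cons_swap u v]

theorem stmt_3 (a b1 b2 b3 b4 k : ℤ)
    (h : 3 * a + b1 + b2 + b3 + b4 = 5 * k + 2) :
    a ^ 2 - b1 ^ 2 - b2 ^ 2 - b3 ^ 2 - b4 ^ 2 ≤ 5 * k ^ 2 + 4 * k ∧
    (a ^ 2 - b1 ^ 2 - b2 ^ 2 - b3 ^ 2 - b4 ^ 2 = 5 * k ^ 2 + 4 * k ↔
      (a = 3 * k + 1 ∧ ({b1, b2, b3, b4} : Multiset ℤ) = {-1 - k, -k, -k, -k}) ∨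
      (a = 3 * k + 2 ∧ b1 = -1 - k ∧ b2 = -1 - k ∧ b3 = -1 - k ∧ b4 = -1 - k)) := by
  obtain ⟨x, rfl⟩ : ∃ x, a = x + 3 * k + 1 := ⟨a - 3 * k - 1, by ring⟩
  obtain ⟨y1, rfl⟩ : ∃ y, b1 = y - k := ⟨b1 + k, by ring⟩
  obtain ⟨y2, rfl⟩ : ∃ y, b2 = y - k := ⟨b2 + k, by ring⟩
  obtain ⟨y3, rfl⟩ : ∃ y, b3 = y - k := ⟨b3 + k, by ring⟩
  obtain ⟨y4, rfl⟩ : ∃ y, b4 = y - k := ⟨b4 + k, by ring⟩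
  replace h : 3 * x + y1 + y2 + y3 + y4 = -1 := by linarith
  -- the key inequality : (x+1)^2 ≤ Σ y^2
  have key : (x + 1) ^ 2 ≤ y1 ^ 2 + y2 ^ 2 + y3 ^ 2 + y4 ^ 2 := by
    by_cases hx : x = 0
    · subst hx
      nlinarith [consec y1, consec y2, consec y3, consec y4]
    · have hx1 : x ≤ -1 ∨ 1 ≤ x := by omega
      have hcau : (3 * x + 1) ^ 2 ≤ 4 * (y1 ^ 2 + y2 ^ 2 + y3 ^ 2 + y4 ^ 2) := by
        rw [show (3 * x + 1) = -(y1 + y2 + y3 + y4) by linarith]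
        nlinarith [sq_nonneg (y1 - y2), sq_nonneg (y1 - y3), sq_nonneg (y1 - y4), sq_nonneg (y2 - y3), sq_nonneg (y2 - y4), sq_nonneg (y3 - y4)]
      rcases hx1 with hx1 | hx1
      · nlinarith [sq_nonneg (x + 1)]
      · nlinarith [sq_nonneg (x - 1)]
  constructor
  · nlinarith [key]
  constructor
  · intro he
    have keq : y1 ^ 2 + y2 ^ 2 + y3 ^ 2 + y4 ^ 2 = (x + 1) ^ 2 := by nlinarith [key]
    have hcau : (3 * x + 1) ^ 2 ≤ 4 * (y1 ^ 2 + y2 ^ 2 + y3 ^ 2 + y4 ^ 2) := by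
      rw [show (3 * x + 1) = -(y1 + y2 + y3 + y4) by linarith]
      nlinarith [sq_nonneg (y1 - y2), sq_nonneg (y1 - y3), sq_nonneg (y1 - y4), sq_nonneg (y2 - y3), sq_nonneg (y2 - y4), sq_nonneg (y3 - y4)]
    have hx0 : 0 ≤ x := by nlinarith [sq_nonneg (x + 1)]
    have hx1 : x ≤ 1 := by nlinarith [sq_nonneg (x - 2)]
    interval_cases x
    · -- x = 0 : Σy = -1, Σ y^2 = 1
      left
      refine ⟨by ring, ?_⟩
      have s1 : y1 ^ 2 ≤ 1 := by nlinarith [sq_nonneg y2, sq_nonneg y3, sq_nonneg y4]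
      have s2 : y2 ^ 2 ≤ 1 := by nlinarith [sq_nonneg y1, sq_nonneg y3, sq_nonneg y4]
      have s3 : y3 ^ 2 ≤ 1 := by nlinarith [sq_nonneg y1, sq_nonneg y2, sq_nonneg y4]
      have s4 : y4 ^ 2 ≤ 1 := by nlinarith [sq_nonneg y1, sq_nonneg y2, sq_nonneg y3]
      have b1l : -1 ≤ y1 := by nlinarith [sq_nonneg (y1 + 1)]
      have b1u : y1 ≤ 1 := by nlinarith [sq_nonneg (y1 - 1)]
      have b2l : -1 ≤ y2 := by nlinarith [sq_nonneg (y2 + 1)]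
      have b2u : y2 ≤ 1 := by nlinarith [sq_nonneg (y2 - 1)]
      have b3l : -1 ≤ y3 := by nlinarith [sq_nonneg (y3 + 1)]
      have b3u : y3 ≤ 1 := by nlinarith [sq_nonneg (y3 - 1)]
      have b4l : -1 ≤ y4 := by nlinarith [sq_nonneg (y4 + 1)]
      have b4u : y4 ≤ 1 := by nlinarith [sq_nonneg (y4 - 1)]
      interval_cases y1 <;> interval_cases y2 <;> interval_cases y3 <;>
        interval_cases y4 <;> norm_num at keq <;> norm_num at h <;> norm_num at ⊢ <;>
        first
          | rfl
          | exact perm2 (-k) (-1 - k)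
          | exact perm3 (-k) (-1 - k)
          | exact perm4 (-k) (-1 - k)
    · -- x = 1 : Σy = -4, Σ y^2 = 4, so all y = -1
      right
      have e1 : y1 = -1 := by nlinarith [sq_nonneg (y1 + 1), sq_nonneg (y2 + 1), sq_nonneg (y3 + 1), sq_nonneg (y4 + 1)]
      have e2 : y2 = -1 := by nlinarith [sq_nonneg (y1 + 1), sq_nonneg (y2 + 1), sq_nonneg (y3 + 1), sq_nonneg (y4 + 1)]
      have e3 : y3 = -1 := by nlinarith [sq_nonneg (y1 + 1), sq_nonneg (y2 + 1), sq_nonneg (y3 + 1), sq_nonneg (y4 + 1)]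
      have e4 : y4 = -1 := by nlinarith [sq_nonneg (y1 + 1), sq_nonneg (y2 + 1), sq_nonneg (y3 + 1), sq_nonneg (y4 + 1)]
      subst e1 e2 e3 e4
      refine ⟨by ring, by ring, by ring, by ring, by ring⟩
  · rintro (⟨ha, hb⟩ | ⟨ha, h1, h2, h3, h4⟩)
    · have hx : x = 0 := by omega
      subst hx
      have hs := congrArg Multiset.sum hb
      have hq := congrArg (fun s : Multiset ℤ => (s.map (· ^ 2)).sum) hb
      simp [Multiset.insert_eq_cons] at hs hq
      nlinarith [hs, hq]
    · have e1 : y1 = -1 := by omega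
      have e2 : y2 = -1 := by omega
      have e3 : y3 = -1 := by omega
      have e4 : y4 = -1 := by omega
      have ex : x = 1 := by omega
      subst e1 e2 e3 e4 ex
      ring
end

section
/- Let $a, b_1, b_2, b_3, b_4$ be integers with $3a + b_1 + b_2 + b_3 + b_4 = 5k-2$ for some integer $k$. Then $a^2 - b_1^2 - b_2^2 - b_3^2 - b_4^2 \le 5k^2 - 4k$. Equality holds if and only if either ($a = 3k-1$ and exactly one $b_i$ equals $1-k$ while the other three equal $-k$), or ($a = 3k-2$ and all $b_i$ equal $1-k$). -/
/-!
With `x i = b i + k` and `M = 3 * k - a` the claim becomes `M ^ 2 ≤ ∑ x i ^ 2` under the constraint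
`∑ x i = 3 * M - 2`. By Cauchy–Schwarz `4 * ∑ x i ^ 2 ≥ (3 * M - 2) ^ 2`, which exceeds `4 * M ^ 2`
unless `M ∈ {1, 2}`. For those two values `M ^ 2 = 3 * M - 2 = ∑ x i ≤ ∑ x i ^ 2`, since `x ≤ x ^ 2`
on `ℤ` with equality exactly for `x ∈ {0, 1}`; this pins down the equality cases.
-/

open Finset

section ZeroOneSums

variable {ι : Type*} (s : Finset ι) (x : ι → ℤ)

theorem Int.sum_le_sum_sq : ∑ i ∈ s, x i ≤ ∑ i ∈ s, x i ^ 2 :=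
  sum_le_sum fun i _ ↦ Int.le_self_sq (x i)

theorem Int.sum_eq_sum_sq_iff :
    ∑ i ∈ s, x i = ∑ i ∈ s, x i ^ 2 ↔ ∀ i ∈ s, x i = 0 ∨ x i = 1 := by
  rw [sum_eq_sum_iff_of_le fun i _ ↦ Int.le_self_sq (x i)]
  refine forall₂_congr fun i _ ↦ ⟨fun h ↦ eq_zero_or_one_of_sq_eq_self h.symm, ?_⟩
  rintro (h | h) <;> simp [h]

variable {s x} {M : ℤ}

theorem sq_lt_sum_sq_of_sum_eq (hs : #s ≤ 4) (hx : ∑ i ∈ s, x i = 3 * M - 2)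
    (hM1 : M ≠ 1) (hM2 : M ≠ 2) : M ^ 2 < ∑ i ∈ s, x i ^ 2 := by
  have hCS : (3 * M - 2) ^ 2 ≤ 4 * ∑ i ∈ s, x i ^ 2 := hx ▸ sq_sum_le_card_mul_sum_sq.trans
    (mul_le_mul_of_nonneg_right (by exact_mod_cast hs) (sum_nonneg fun i _ ↦ sq_nonneg _))
  -- `(3 * M - 2) ^ 2 - 4 * M ^ 2 = (5 * M - 2) * (M - 2)`
  have hgap : 0 < (5 * M - 2) * (M - 2) := by
    rcases le_or_gt M 0 with hM | hM
    · nlinarith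
    · nlinarith [show 3 ≤ M by omega]
  linarith

theorem sq_le_sum_sq_of_sum_eq (hs : #s ≤ 4) (hx : ∑ i ∈ s, x i = 3 * M - 2) :
    M ^ 2 ≤ ∑ i ∈ s, x i ^ 2 := by
  by_cases hM : M = 1 ∨ M = 2
  · have hM' : M ^ 2 = 3 * M - 2 := by rcases hM with rfl | rfl <;> norm_num
    exact hM' ▸ hx ▸ Int.sum_le_sum_sq s x
  · obtain ⟨hM1, hM2⟩ := not_or.mp hM
    exact (sq_lt_sum_sq_of_sum_eq hs hx hM1 hM2).le

theorem sq_eq_sum_sq_iff_of_sum_eq (hs : #s ≤ 4) (hx : ∑ i ∈ s, x i = 3 * M - 2) :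
    M ^ 2 = ∑ i ∈ s, x i ^ 2 ↔ (M = 1 ∨ M = 2) ∧ ∀ i ∈ s, x i = 0 ∨ x i = 1 := by
  by_cases hM : M = 1 ∨ M = 2
  · have hM' : M ^ 2 = 3 * M - 2 := by rcases hM with rfl | rfl <;> norm_num
    rw [hM', ← hx, Int.sum_eq_sum_sq_iff, and_iff_right hM]
  · obtain ⟨hM1, hM2⟩ := not_or.mp hM
    simp only [(sq_lt_sum_sq_of_sum_eq hs hx hM1 hM2).ne, hM, false_and]

end ZeroOneSums

theorem Int.multiset_eq_one_zero_zero_zero_iff (x₁ x₂ x₃ x₄ : ℤ) :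
    ({x₁, x₂, x₃, x₄} : Multiset ℤ) = {1, 0, 0, 0} ↔
      ((x₁ = 0 ∨ x₁ = 1) ∧ (x₂ = 0 ∨ x₂ = 1) ∧ (x₃ = 0 ∨ x₃ = 1) ∧ (x₄ = 0 ∨ x₄ = 1)) ∧
        x₁ + x₂ + x₃ + x₄ = 1 := by
  constructor
  · intro h
    have hmem : ∀ y ∈ ({x₁, x₂, x₃, x₄} : Multiset ℤ), y = 0 ∨ y = 1 := by
      intro y hy
      rw [h] at hy
      simp only [Multiset.insert_eq_cons, Multiset.mem_cons, Multiset.mem_singleton] at hy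
      omega
    have hsum := congrArg Multiset.sum h
    simp only [Multiset.insert_eq_cons, Multiset.sum_cons, Multiset.sum_singleton] at hsum
    simp only [Multiset.insert_eq_cons, Multiset.mem_cons, Multiset.mem_singleton,
      forall_eq_or_imp, forall_eq] at hmem
    exact ⟨hmem, by omega⟩
  · rintro ⟨⟨rfl | rfl, rfl | rfl, rfl | rfl, rfl | rfl⟩, hsum⟩ <;> first | omega | decide

theorem stmt_4 (a b1 b2 b3 b4 k : ℤ)
    (h : 3 * a + b1 + b2 + b3 + b4 = 5 * k - 2) :
    a ^ 2 - b1 ^ 2 - b2 ^ 2 - b3 ^ 2 - b4 ^ 2 ≤ 5 * k ^ 2 - 4 * k ∧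
    (a ^ 2 - b1 ^ 2 - b2 ^ 2 - b3 ^ 2 - b4 ^ 2 = 5 * k ^ 2 - 4 * k ↔
      (a = 3 * k - 1 ∧ ({b1, b2, b3, b4} : Multiset ℤ) = {1 - k, -k, -k, -k}) ∨
      (a = 3 * k - 2 ∧ b1 = 1 - k ∧ b2 = 1 - k ∧ b3 = 1 - k ∧ b4 = 1 - k)) := by
  let x : Fin 4 → ℤ := ![b1 + k, b2 + k, b3 + k, b4 + k]
  have hx : ∑ i, x i = 3 * (3 * k - a) - 2 := by
    simp only [x, Fin.sum_univ_four, Fin.isValue, Matrix.cons_val_zero, Matrix.cons_val_one,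
      Matrix.cons_val]
    linarith
  have hQ : a ^ 2 - b1 ^ 2 - b2 ^ 2 - b3 ^ 2 - b4 ^ 2 - (5 * k ^ 2 - 4 * k) =
      (3 * k - a) ^ 2 - ∑ i, x i ^ 2 := by
    simp only [x, Fin.sum_univ_four, Fin.isValue, Matrix.cons_val_zero, Matrix.cons_val_one,
      Matrix.cons_val]
    linear_combination 2 * k * h
  have hcard : #(univ : Finset (Fin 4)) ≤ 4 := by simp
  refine ⟨by linarith [sq_le_sum_sq_of_sum_eq hcard hx], ?_⟩
  have hshift : ({b1, b2, b3, b4} : Multiset ℤ) = {1 - k, -k, -k, -k} ↔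
      ({b1 + k, b2 + k, b3 + k, b4 + k} : Multiset ℤ) = {1, 0, 0, 0} := by
    rw [← (Multiset.map_injective (add_left_injective k)).eq_iff]
    simp
  rw [← sub_eq_zero, hQ, sub_eq_zero, sq_eq_sum_sq_iff_of_sum_eq hcard hx, hshift,
    Int.multiset_eq_one_zero_zero_zero_iff]
  simp only [x, mem_univ, forall_const, Fin.forall_fin_succ, Fin.isValue, Matrix.cons_val_zero,
    Matrix.cons_val_succ, Matrix.cons_val_fin_one]
  omega
end
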